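/- arXiv:1311.6226 — 2 statements merged into one kernel-verified Lean document; each statement's English description precedes it below -/
import Mathlib

section
/- There is no continuous function X : [0,∞) → ℝ with X(0) = 0 satisfying X(t) = ∫₀ᵗ (1/2 - sgn(X(s))) ds for all t ≥ 0, where sgn(x) = 1 for x > 0, -1 for x < 0, and 0 for x = 0. -/
/-!
If `X` ever leaves `0`, pick `b` with `X b ≠ 0` and let `c` be the last zero of `X` before `b`.
By the intermediate value theorem `X` keeps the sign of `X b` on `(c, b]`, so
`X b = (1/2 - sgn (X b)) (b - c)`, which has the opposite sign: a contradiction. Hence `X = 0`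
on `[0, ∞)`, but then `X 1 = ∫₀¹ 1/2 = 1/2`.
-/

open MeasureTheory Set

theorem Real.measurable_sign : Measurable Real.sign :=
  Measurable.ite measurableSet_Iio measurable_const
    (Measurable.ite measurableSet_Ioi measurable_const measurable_const)

theorem ContinuousOn.exists_last_zero {f : ℝ → ℝ} {a b : ℝ} (hab : a ≤ b)
    (hf : ContinuousOn f (Icc a b)) (ha : f a = 0) :
    ∃ c ∈ Icc a b, f c = 0 ∧ ∀ s ∈ Ioc c b, f s ≠ 0 := by
  have hclosed : IsClosed (Icc a b ∩ f ⁻¹' {0}) :=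
    hf.preimage_isClosed_of_isClosed isClosed_Icc isClosed_singleton
  obtain ⟨c, ⟨hc, hfc⟩, hmax⟩ :=
    (isCompact_Icc.of_isClosed_subset hclosed inter_subset_left).exists_isGreatest
      ⟨a, left_mem_Icc.2 hab, ha⟩
  refine ⟨c, hc, hfc, fun s hs hfs => ?_⟩
  exact hs.1.not_ge (hmax ⟨⟨hc.1.trans hs.1.le, hs.2⟩, hfs⟩)

theorem ContinuousOn.sign_eq_of_forall_ne_zero {f : ℝ → ℝ} {c b : ℝ}
    (hf : ContinuousOn f (Icc c b)) (hne : ∀ s ∈ Ioc c b, f s ≠ 0) {s : ℝ} (hs : s ∈ Ioc c b) :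
    Real.sign (f s) = Real.sign (f b) := by
  have hsub : uIcc s b ⊆ Ioc c b := by
    rw [uIcc_of_le hs.2]
    exact Icc_subset_Ioc_iff hs.2 |>.2 ⟨hs.1, le_rfl⟩
  have hzero : (0 : ℝ) ∉ uIcc (f s) (f b) := fun h0 ↦ by
    obtain ⟨x, hx, hfx⟩ :=
      intermediate_value_uIcc (hf.mono (hsub.trans Ioc_subset_Icc_self)) h0
    exact hne x (hsub hx) hfx
  rcases (hne s hs).lt_or_gt with h | h <;>
    rcases (hne b (right_mem_Ioc.2 (hs.1.trans_le hs.2))).lt_or_gt with h' | h'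
  · rw [Real.sign_of_neg h, Real.sign_of_neg h']
  · exact absurd (mem_uIcc.2 (.inl ⟨h.le, h'.le⟩)) hzero
  · exact absurd (mem_uIcc.2 (.inr ⟨h'.le, h.le⟩)) hzero
  · rw [Real.sign_of_pos h, Real.sign_of_pos h']

theorem intervalIntegrable_half_sub_sign {X : ℝ → ℝ} {a b : ℝ} (hX : ContinuousOn X (uIcc a b)) :
    IntervalIntegrable (fun s ↦ 1 / 2 - Real.sign (X s)) volume a b := by
  refine IntervalIntegrable.mono_fun' (g := fun _ ↦ 3 / 2) intervalIntegrable_const ?_ ?_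
  · exact (aemeasurable_const.sub (Real.measurable_sign.comp_aemeasurable
      ((hX.mono uIoc_subset_uIcc).aemeasurable measurableSet_uIoc))).aestronglyMeasurable
  · refine .of_forall fun s ↦ ?_
    rcases Real.sign_apply_eq (X s) with h | h | h <;> norm_num [h]

theorem integral_half_sub_sign_of_sign_eq {X : ℝ → ℝ} {c b : ℝ} (hcb : c ≤ b)
    (hsign : ∀ s ∈ Ioc c b, Real.sign (X s) = Real.sign (X b)) :
    ∫ s in c..b, (1 / 2 - Real.sign (X s)) = (1 / 2 - Real.sign (X b)) * (b - c) := by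
  rw [intervalIntegral.integral_congr_ae (g := fun _ ↦ 1 / 2 - Real.sign (X b))
    (.of_forall fun s hs ↦ by rw [uIoc_of_le hcb] at hs; rw [hsign s hs]),
    intervalIntegral.integral_const, smul_eq_mul, mul_comm]

/-- There is no continuous function `X : [0,∞) → ℝ` with `X 0 = 0` satisfying
`X t = ∫₀ᵗ (1/2 - sgn (X s)) ds` for all `t ≥ 0`. -/
theorem stmt_0 :
    ¬ ∃ X : ℝ → ℝ, ContinuousOn X (Set.Ici 0) ∧ X 0 = 0 ∧
      ∀ t : ℝ, 0 ≤ t → X t = ∫ s in (0:ℝ)..t, (1/2 - Real.sign (X s)) := by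
  rintro ⟨X, hcont, h0, hX⟩
  have hcontIcc : ∀ b, ContinuousOn X (Icc 0 b) := fun b ↦ hcont.mono Icc_subset_Ici_self
  have hzero : ∀ b, 0 ≤ b → X b = 0 := by
    intro b hb
    by_contra hXb
    obtain ⟨c, hc, hXc, hne⟩ := (hcontIcc b).exists_last_zero hb h0
    have hcb : c < b := hc.2.lt_of_ne (by rintro rfl; exact hXb hXc)
    have hsign : ∀ s ∈ Ioc c b, Real.sign (X s) = Real.sign (X b) :=
      fun s ↦ ((hcontIcc b).mono (Icc_subset_Icc_left hc.1)).sign_eq_of_forall_ne_zero hne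
    have hint : ∀ t ∈ Icc 0 b, IntervalIntegrable (fun s ↦ 1 / 2 - Real.sign (X s)) volume 0 t :=
      fun t ht ↦ intervalIntegrable_half_sub_sign ((uIcc_of_le ht.1).symm ▸ hcontIcc t)
    have hXb_eq : X b = (1 / 2 - Real.sign (X b)) * (b - c) := by
      rw [← integral_half_sub_sign_of_sign_eq hcb.le hsign,
        ← intervalIntegral.integral_interval_sub_left (hint b ⟨hb, le_rfl⟩) (hint c hc),
        ← hX b hb, ← hX c hc.1, hXc, sub_zero]
    have hpos := Real.sign_mul_pos_of_ne_zero _ hXb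
    rcases Real.sign_apply_eq_of_ne_zero _ hXb with h | h <;> rw [h] at hpos hXb_eq <;> nlinarith
  have h1 := hX 1 zero_le_one
  rw [integral_half_sub_sign_of_sign_eq zero_le_one
    fun s hs ↦ by rw [hzero s hs.1.le, hzero 1 zero_le_one], hzero 1 zero_le_one] at h1
  norm_num at h1
end

section
/- Let μ_i : ℝᵈ → ℝ be locally bounded and measurable, and let h : ℝᵈ → ℝ be locally Lipschitz with h(0, x₂, …, x_d) = 0 for all (x₂, …, x_d). Suppose additionally that on each of the half-spaces {x₁ > 0} and {x₁ < 0}, μ_i agrees with the restriction of a C¹ function. Then the product x ↦ μ_i(x) h(x) is locally Lipschitz on ℝᵈ. -/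
open Metric

lemma locallyLipschitz_mul {E : Type*} [MetricSpace E]
    {f g : E → ℝ} (hf : LocallyLipschitz f) (hg : LocallyLipschitz g) :
    LocallyLipschitz fun x => f x * g x := by
  intro x
  obtain ⟨K1, t1, ht1, hL1⟩ := hf x
  obtain ⟨K2, t2, ht2, hL2⟩ := hg x
  obtain ⟨r, hr, hball⟩ := Metric.mem_nhds_iff.mp (Filter.inter_mem ht1 ht2)
  set M1 : ℝ := |f x| + K1 * r with hM1
  set M2 : ℝ := |g x| + K2 * r with hM2
  have hfb : ∀ y ∈ ball x r, |f y| ≤ M1 := by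
    intro y hy
    have := hL1.dist_le_mul y (hball hy).1 x (hball (mem_ball_self hr)).1
    rw [Real.dist_eq] at this
    have h2 : dist y x ≤ r := le_of_lt (mem_ball.mp hy)
    have := abs_sub_abs_le_abs_sub (f y) (f x)
    nlinarith [K1.coe_nonneg, dist_nonneg (x := y) (y := x)]
  have hgb : ∀ y ∈ ball x r, |g y| ≤ M2 := by
    intro y hy
    have := hL2.dist_le_mul y (hball hy).2 x (hball (mem_ball_self hr)).2
    rw [Real.dist_eq] at this
    have h2 : dist y x ≤ r := le_of_lt (mem_ball.mp hy)
    have := abs_sub_abs_le_abs_sub (g y) (g x)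
    nlinarith [K2.coe_nonneg, dist_nonneg (x := y) (y := x)]
  have hMnn : (0:ℝ) ≤ M1 * K2 + M2 * K1 := by positivity
  refine ⟨(M1 * K2 + M2 * K1).toNNReal, ball x r, ball_mem_nhds x hr, ?_⟩
  rw [lipschitzOnWith_iff_dist_le_mul]
  intro y hy z hz
  rw [Real.dist_eq]
  have e1 := hL1.dist_le_mul y (hball hy).1 z (hball hz).1
  have e2 := hL2.dist_le_mul y (hball hy).2 z (hball hz).2
  rw [Real.dist_eq] at e1 e2
  have key : |f y * g y - f z * g z| ≤ M1 * (K2 * dist y z) + M2 * (K1 * dist y z) := by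
    have : f y * g y - f z * g z = f y * (g y - g z) + g z * (f y - f z) := by ring
    rw [this]
    calc |f y * (g y - g z) + g z * (f y - f z)|
        ≤ |f y * (g y - g z)| + |g z * (f y - f z)| := abs_add_le _ _
      _ = |f y| * |g y - g z| + |g z| * |f y - f z| := by rw [abs_mul, abs_mul]
      _ ≤ M1 * (K2 * dist y z) + M2 * (K1 * dist y z) :=
          add_le_add (mul_le_mul (hfb y hy) e2 (abs_nonneg _) (by positivity))
            (mul_le_mul (hgb z hz) e1 (abs_nonneg _) (by positivity))
  rw [Real.coe_toNNReal _ hMnn]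
  nlinarith [key]

open Metric

/-- If `μᵢ : ℝᵈ → ℝ` is locally bounded and measurable, agrees on each open half-space
`{x₁ > 0}`, `{x₁ < 0}` with the restriction of a `C¹` function, and `h` is locally
Lipschitz and vanishes on the hyperplane `{x₁ = 0}`, then `μᵢ · h` is locally Lipschitz. -/
theorem stmt_15 (d : ℕ) [NeZero d]
    (μi h : EuclideanSpace ℝ (Fin d) → ℝ)
    (hμmeas : Measurable μi)
    (hμlocbdd : ∀ x : EuclideanSpace ℝ (Fin d), ∃ r > 0, ∃ M : ℝ,
      ∀ y ∈ ball x r, |μi y| ≤ M)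
    (hhlip : LocallyLipschitz h)
    (hh0 : ∀ x : EuclideanSpace ℝ (Fin d), x 0 = 0 → h x = 0)
    (hpieces : ∃ μp μm : EuclideanSpace ℝ (Fin d) → ℝ,
      ContDiff ℝ 1 μp ∧ ContDiff ℝ 1 μm ∧
      (∀ x : EuclideanSpace ℝ (Fin d), 0 < x 0 → μi x = μp x) ∧
      (∀ x : EuclideanSpace ℝ (Fin d), x 0 < 0 → μi x = μm x)) :
    LocallyLipschitz (fun x => μi x * h x) := by
  obtain ⟨μp, μm, hμp, hμm, hp, hm⟩ := hpieces
  have hplip : LocallyLipschitz fun x => μp x * h x :=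
    locallyLipschitz_mul hμp.locallyLipschitz hhlip
  have hmlip : LocallyLipschitz fun x => μm x * h x :=
    locallyLipschitz_mul hμm.locallyLipschitz hhlip
  have hfp : ∀ y : EuclideanSpace ℝ (Fin d), 0 ≤ y 0 → μi y * h y = μp y * h y := by
    intro y hy
    rcases hy.lt_or_eq with h1 | h1
    · rw [hp y h1]
    · rw [hh0 y h1.symm]; ring
  have hfm : ∀ y : EuclideanSpace ℝ (Fin d), y 0 ≤ 0 → μi y * h y = μm y * h y := by
    intro y hy
    rcases hy.lt_or_eq with h1 | h1
    · rw [hm y h1]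
    · rw [hh0 y h1]; ring
  intro x
  obtain ⟨K1, t1, ht1, hL1⟩ := hplip x
  obtain ⟨K2, t2, ht2, hL2⟩ := hmlip x
  obtain ⟨r, hr, hball⟩ := Metric.mem_nhds_iff.mp (Filter.inter_mem ht1 ht2)
  refine ⟨max K1 K2, ball x r, ball_mem_nhds x hr, ?_⟩
  rw [lipschitzOnWith_iff_dist_le_mul]
  have hKc : ((max K1 K2 : NNReal) : ℝ) = max (K1 : ℝ) (K2 : ℝ) := NNReal.coe_max K1 K2
  have hK1 : (K1 : ℝ) ≤ max (K1 : ℝ) (K2 : ℝ) := le_max_left _ _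
  have hK2 : (K2 : ℝ) ≤ max (K1 : ℝ) (K2 : ℝ) := le_max_right _ _
  have mixed : ∀ y ∈ ball x r, ∀ z ∈ ball x r, 0 ≤ y 0 → z 0 ≤ 0 →
      dist (μi y * h y) (μi z * h z) ≤ max (K1 : ℝ) (K2 : ℝ) * dist y z := by
    intro y hy z hz hy0 hz0
    rcases eq_or_lt_of_le (sub_nonneg.mpr (hz0.trans hy0)) with hd | hd
    · -- y 0 = z 0 = 0
      have hy0' : y 0 = 0 := le_antisymm (by linarith [sub_eq_zero.mp hd.symm]) hy0
      have hz0' : z 0 = 0 := by linarith [sub_eq_zero.mp hd.symm]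
      rw [hfm y hy0'.le, hfm z hz0]
      exact (hL2.dist_le_mul y (hball hy).2 z (hball hz).2).trans
        (mul_le_mul_of_nonneg_right hK2 dist_nonneg)
    · -- y 0 - z 0 > 0
      set t : ℝ := y 0 / (y 0 - z 0) with htdef
      have ht0 : 0 ≤ t := div_nonneg hy0 hd.le
      have ht1' : t ≤ 1 := by
        rw [div_le_one hd]; linarith
      set w : EuclideanSpace ℝ (Fin d) := (1 - t) • y + t • z with hwdef
      have hw : w ∈ ball x r :=
        (convex_ball x r) hy hz (by linarith) ht0 (by ring)
      have hw0 : w 0 = 0 := by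
        have : w 0 = (1 - t) * y 0 + t * z 0 := by
          simp [hwdef, PiLp.add_apply, PiLp.smul_apply, smul_eq_mul]
        rw [this, htdef]
        field_simp
        ring
      have hyw : y - w = t • (y - z) := by
        rw [hwdef]; module
      have hwz : w - z = (1 - t) • (y - z) := by
        rw [hwdef]; module
      have dyw : dist y w = t * dist y z := by
        rw [dist_eq_norm, dist_eq_norm, hyw, norm_smul, Real.norm_eq_abs,
          abs_of_nonneg ht0]
      have dwz : dist w z = (1 - t) * dist y z := by
        rw [dist_eq_norm, dist_eq_norm, hwz, norm_smul, Real.norm_eq_abs,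
          abs_of_nonneg (by linarith)]
      have e1 : dist (μi y * h y) (μi w * h w) ≤ (K1 : ℝ) * dist y w := by
        rw [hfp y hy0, hfp w hw0.ge]
        exact hL1.dist_le_mul y (hball hy).1 w (hball hw).1
      have e2 : dist (μi w * h w) (μi z * h z) ≤ (K2 : ℝ) * dist w z := by
        rw [hfm w hw0.le, hfm z hz0]
        exact hL2.dist_le_mul w (hball hw).2 z (hball hz).2
      have tri := dist_triangle (μi y * h y) (μi w * h w) (μi z * h z)
      have hD : (0:ℝ) ≤ dist y z := dist_nonneg
      rw [dyw] at e1
      rw [dwz] at e2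
      nlinarith [mul_nonneg (mul_nonneg (sub_nonneg.mpr hK1) ht0) hD,
        mul_nonneg (mul_nonneg (sub_nonneg.mpr hK2) (by linarith : (0:ℝ) ≤ 1 - t)) hD]
  intro y hy z hz
  rw [hKc]
  rcases le_total 0 (y 0) with hy0 | hy0 <;> rcases le_total 0 (z 0) with hz0 | hz0
  · rw [hfp y hy0, hfp z hz0]
    exact (hL1.dist_le_mul y (hball hy).1 z (hball hz).1).trans
      (mul_le_mul_of_nonneg_right hK1 dist_nonneg)
  · exact mixed y hy z hz hy0 hz0
  · rw [dist_comm, dist_comm y z]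
    exact mixed z hz y hy hz0 hy0
  · rw [hfm y hy0, hfm z hz0]
    exact (hL2.dist_le_mul y (hball hy).2 z (hball hz).2).trans
      (mul_le_mul_of_nonneg_right hK2 dist_nonneg)
end
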